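/- arXiv:2410.06490 — 3 statements merged into one kernel-verified Lean document; each statement's English description precedes it below -/
import Mathlib

section
/- Let d, M, E be positive integers, L₁, η_c, η_s, R, R' > 0, σ ≥ 0, and let L : ℝ^d × ℝ^M → ℝ satisfy: (i) for the fixed guiding vector G ∈ ℝ^M, the map θ ↦ L(θ, G) is differentiable with L₁-Lipschitz gradient, and (ii) for every θ ∈ ℝ^d the map G' ↦ L(θ, G') is 1-Lipschitz with respect to the Euclidean norm on ℝ^M. On a probability space, let θ⁰ ∈ ℝ^d be fixed and define local SGD iterates θ^{e+1} = θ^e − η_c ω^e for e = 0, …, E−1, where each ω^e satisfies E[ω^e ∣ θ⁰, …, θ^e] = ∇_θ L(θ^e, G) and E[‖ω^e − ∇_θ L(θ^e, G)‖₂² ∣ θ⁰, …, θ^e] ≤ σ². Let π be a random vector in ℝ^M with E[‖π‖₂] ≤ 2 η_c² R' E R. Then E[L(θ^E, G − η_s π)] ≤ L(θ⁰, G) + (L₁η_c²/2 − η_c) · Σ_{e=0}^{E−1} E[‖∇_θ L(θ^e, G)‖₂²] + L₁ E η_c² σ² / 2 + 2 η_c² η_s R' E R. -/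
/-!
Each local step is controlled by the descent lemma for the `L₁`-smooth map `θ ↦ L(θ, G)`.
Writing the stochastic gradient as the true gradient plus noise, the cross term has zero
expectation by the pull-out property of conditional expectation (the gradient at `θ^e` is
measurable with respect to the history `θ⁰, …, θ^e`), and the squared noise has expectation at
most `σ²`. The `E` step bounds are summed along each sample path and integrated once. The server
step costs at most `η_s 𝔼‖π‖`, since `L` is 1-Lipschitz in the guiding vector.
-/

open MeasureTheory
open scoped RealInnerProductSpace

section Descent

variable {F : Type*} [NormedAddCommGroup F] [InnerProductSpace ℝ F] [CompleteSpace F]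
  {f : F → ℝ} {K : ℝ}

theorem le_add_inner_add_of_lipschitz_gradient (hf : Differentiable ℝ f)
    (hK : ∀ x y, ‖gradient f x - gradient f y‖ ≤ K * ‖x - y‖) (x y : F) :
    f y ≤ f x + ⟪gradient f x, y - x⟫ + K / 2 * ‖y - x‖ ^ 2 := by
  set v := y - x
  let φ : ℝ → ℝ := fun t => f (x + t • v) - t * ⟪gradient f x, v⟫ - K / 2 * t ^ 2 * ‖v‖ ^ 2
  have hφ : ∀ t, HasDerivAt φ
      (⟪gradient f (x + t • v), v⟫ - ⟪gradient f x, v⟫ - K * t * ‖v‖ ^ 2) t := by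
    intro t
    have hline : HasDerivAt (fun s : ℝ => x + s • v) v t := by
      simpa using ((hasDerivAt_id t).smul_const v).const_add x
    have hf_line := (hf (x + t • v)).hasGradientAt.hasFDerivAt.comp_hasDerivAt t hline
    simp only [InnerProductSpace.toDual_apply_apply] at hf_line
    exact ((hf_line.sub ((hasDerivAt_id t).mul_const ⟪gradient f x, v⟫)).sub
      ((((hasDerivAt_id t).pow 2).const_mul (K / 2)).mul_const (‖v‖ ^ 2))).congr_deriv
      (by simp only [id, Nat.cast_ofNat, Nat.add_one_sub_one, pow_one]; ring)
  have hφ' : ∀ t ∈ Set.Ioo (0 : ℝ) 1,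
      ⟪gradient f (x + t • v), v⟫ - ⟪gradient f x, v⟫ - K * t * ‖v‖ ^ 2 ≤ 0 := by
    intro t ht
    have := calc ⟪gradient f (x + t • v), v⟫ - ⟪gradient f x, v⟫
        = ⟪gradient f (x + t • v) - gradient f x, v⟫ := (inner_sub_left ..).symm
      _ ≤ ‖gradient f (x + t • v) - gradient f x‖ * ‖v‖ := real_inner_le_norm _ _
      _ ≤ K * ‖x + t • v - x‖ * ‖v‖ := by gcongr; exact hK _ _
      _ = K * t * ‖v‖ ^ 2 := by
        rw [add_sub_cancel_left, norm_smul, Real.norm_eq_abs, abs_of_pos ht.1]; ring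
    linarith
  have hanti : AntitoneOn φ (Set.Icc 0 1) :=
    antitoneOn_of_hasDerivWithinAt_nonpos (convex_Icc 0 1)
      (fun t _ => (hφ t).continuousAt.continuousWithinAt)
      (fun t _ => (hφ t).hasDerivWithinAt) (by simpa using hφ')
  have := hanti (by simp) (by simp) zero_le_one
  simp only [φ, v, zero_smul, one_smul, add_zero, add_sub_cancel, zero_mul, one_mul, mul_one,
    sub_zero, one_pow, ne_eq, OfNat.ofNat_ne_zero, not_false_eq_true, zero_pow, mul_zero] at this
  linarith

/-- The descent-lemma increment for the step `x ↦ x - η • w` at gradient `g`, with the noise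
`w - g` entering linearly only through `⟪g, w - g⟫`, which has conditional mean zero. -/
noncomputable def sgdDescentBound (K η : ℝ) (g w : F) : ℝ :=
  (K * η ^ 2 / 2 - η) * ‖g‖ ^ 2 + (K * η ^ 2 - η) * ⟪g, w - g⟫ + K * η ^ 2 / 2 * ‖w - g‖ ^ 2

theorem le_add_sgdDescentBound (hf : Differentiable ℝ f)
    (hK : ∀ x y, ‖gradient f x - gradient f y‖ ≤ K * ‖x - y‖) (η : ℝ) (x w : F) :
    f (x - η • w) ≤ f x + sgdDescentBound K η (gradient f x) w := by
  have h := le_add_inner_add_of_lipschitz_gradient hf hK x (x - η • w)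
  set g := gradient f x
  obtain ⟨ξ, rfl⟩ : ∃ ξ, w = g + ξ := ⟨w - g, by abel⟩
  rw [sub_sub_cancel_left, norm_neg, inner_neg_right, norm_smul, inner_smul_right,
    inner_add_right, real_inner_self_eq_norm_sq, mul_pow, Real.norm_eq_abs, sq_abs,
    norm_add_sq_real] at h
  unfold sgdDescentBound
  rw [add_sub_cancel_left]
  linear_combination h

theorem le_add_sum_sgdDescentBound (hf : Differentiable ℝ f)
    (hK : ∀ x y, ‖gradient f x - gradient f y‖ ≤ K * ‖x - y‖) {η : ℝ} {n : ℕ} {θ w : ℕ → F}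
    (hθ : ∀ e < n, θ (e + 1) = θ e - η • w e) :
    f (θ n) ≤ f (θ 0) + ∑ e ∈ Finset.range n, sgdDescentBound K η (gradient f (θ e)) (w e) := by
  induction n with
  | zero => simp
  | succ n ih =>
    rw [Finset.sum_range_succ, hθ n n.lt_succ_self]
    have := le_add_sgdDescentBound hf hK η (θ n) (w n)
    linarith [ih fun e he => hθ e (he.trans n.lt_succ_self)]

end Descent

section ConditionalExpectation

variable {Ω F : Type*} {m mΩ : MeasurableSpace Ω} {μ : Measure Ω}
  [NormedAddCommGroup F] [InnerProductSpace ℝ F]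

theorem integral_le_of_condExp_le [IsProbabilityMeasure μ] (hm : m ≤ mΩ) {f : Ω → ℝ} {c : ℝ}
    (hf : ∀ᵐ ω ∂μ, μ[f|m] ω ≤ c) : ∫ ω, f ω ∂μ ≤ c := by
  rw [← integral_condExp hm]
  simpa using integral_mono_ae integrable_condExp (integrable_const c) hf

theorem integral_inner_sub_eq_zero_of_condExp_eq [CompleteSpace F] [IsFiniteMeasure μ]
    (hm : m ≤ mΩ) {g W : Ω → F} (hg : StronglyMeasurable[m] g) (hW : Integrable W μ)
    (hWg : μ[W|m] =ᵐ[μ] g) (hgW : Integrable (fun ω => ⟪g ω, W ω - g ω⟫) μ) :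
    ∫ ω, ⟪g ω, W ω - g ω⟫ ∂μ = 0 := by
  have hg_int : Integrable g μ := integrable_condExp.congr hWg
  have hmean : μ[W - g|m] =ᵐ[μ] 0 := by
    filter_upwards [condExp_sub hW hg_int m, hWg] with ω hsub hω
    rw [hsub, Pi.sub_apply, hω, condExp_of_stronglyMeasurable hm hg hg_int, sub_self, Pi.zero_apply]
  have hpull := condExp_bilin_of_stronglyMeasurable_left (innerSL ℝ) hg hgW (hW.sub hg_int)
  rw [← integral_condExp hm]
  refine (integral_congr_ae hpull).trans ?_
  refine (integral_congr_ae (hmean.mono fun ω hω => ?_)).trans (integral_zero Ω ℝ)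
  rw [← Pi.sub_def, hω, Pi.zero_apply, map_zero]

variable (hm : m ≤ mΩ) {K η σ : ℝ} {g W : Ω → F}
  (hg : StronglyMeasurable[m] g) (hW : Integrable W μ)
  (hg2 : Integrable (fun ω => ‖g ω‖ ^ 2) μ) (hWg2 : Integrable (fun ω => ‖W ω - g ω‖ ^ 2) μ)
include hm hg hW hg2 hWg2

theorem integrable_inner_sub_of_integrable_sq :
    Integrable (fun ω => ⟪g ω, W ω - g ω⟫) μ := by
  have hg_meas := (hg.mono hm).aestronglyMeasurable (μ := μ)
  rw [← memLp_one_iff_integrable]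
  exact (innerSL ℝ).memLp_of_bilin 1 ((memLp_two_iff_integrable_sq_norm hg_meas).2 hg2)
    ((memLp_two_iff_integrable_sq_norm (hW.1.sub hg_meas)).2 hWg2)

theorem integrable_sgdDescentBound :
    Integrable (fun ω => sgdDescentBound K η (g ω) (W ω)) μ :=
  ((hg2.const_mul _).add
    ((integrable_inner_sub_of_integrable_sq hm hg hW hg2 hWg2).const_mul _)).add (hWg2.const_mul _)

theorem integral_sgdDescentBound_le [CompleteSpace F] [IsProbabilityMeasure μ] (hK : 0 ≤ K)
    (hWg : μ[W|m] =ᵐ[μ] g) (hvar : ∀ᵐ ω ∂μ, μ[fun ω => ‖W ω - g ω‖ ^ 2|m] ω ≤ σ ^ 2) :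
    ∫ ω, sgdDescentBound K η (g ω) (W ω) ∂μ ≤
      (K * η ^ 2 / 2 - η) * ∫ ω, ‖g ω‖ ^ 2 ∂μ + K * η ^ 2 * σ ^ 2 / 2 := by
  have hgW := integrable_inner_sub_of_integrable_sq hm hg hW hg2 hWg2
  have hsum : Integrable (fun ω => (K * η ^ 2 / 2 - η) * ‖g ω‖ ^ 2 +
      (K * η ^ 2 - η) * ⟪g ω, W ω - g ω⟫) μ := (hg2.const_mul _).add (hgW.const_mul _)
  simp only [sgdDescentBound]
  rw [integral_add hsum (hWg2.const_mul _), integral_add (hg2.const_mul _) (hgW.const_mul _),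
    integral_const_mul, integral_const_mul, integral_const_mul,
    integral_inner_sub_eq_zero_of_condExp_eq hm hg hW hWg hgW, mul_zero, add_zero]
  have : K * η ^ 2 / 2 * ∫ ω, ‖W ω - g ω‖ ^ 2 ∂μ ≤ K * η ^ 2 / 2 * σ ^ 2 := by
    gcongr; exact integral_le_of_condExp_le hm hvar
  linarith

end ConditionalExpectation

section SGD

variable {Ω F : Type*} {mΩ : MeasurableSpace Ω} {μ : Measure Ω}
  [NormedAddCommGroup F] [InnerProductSpace ℝ F] {η : ℝ} {n : ℕ} {θ w : ℕ → Ω → F}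

theorem measurable_of_succ_eq_sub_smul [MeasurableSpace F] [BorelSpace F]
    [SecondCountableTopology F] (h0 : Measurable (θ 0)) (hw : ∀ e < n, Measurable (w e))
    (hθ : ∀ e < n, ∀ ω, θ (e + 1) ω = θ e ω - η • w e ω) : ∀ e ≤ n, Measurable (θ e) := by
  intro e he
  induction e with
  | zero => exact h0
  | succ e ih => exact funext (hθ e he) ▸ (ih (by omega)).sub ((hw e he).const_smul η)

theorem integral_sgd_le [CompleteSpace F] [IsProbabilityMeasure μ] {f : F → ℝ} {K σ : ℝ}
    {x₀ : F} {𝓕 : ℕ → MeasurableSpace Ω} (hf : Differentiable ℝ f) (hK : 0 ≤ K)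
    (hKf : ∀ x y, ‖gradient f x - gradient f y‖ ≤ K * ‖x - y‖) (hθ0 : ∀ ω, θ 0 ω = x₀)
    (hθ : ∀ e < n, ∀ ω, θ (e + 1) ω = θ e ω - η • w e ω) (h𝓕 : ∀ e < n, 𝓕 e ≤ mΩ)
    (hθ𝓕 : ∀ e < n, StronglyMeasurable[𝓕 e] (θ e)) (hw : ∀ e < n, Integrable (w e) μ)
    (hmean : ∀ e < n, μ[w e|𝓕 e] =ᵐ[μ] fun ω => gradient f (θ e ω))
    (hvar_int : ∀ e < n, Integrable (fun ω => ‖w e ω - gradient f (θ e ω)‖ ^ 2) μ)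
    (hvar : ∀ e < n, ∀ᵐ ω ∂μ, μ[fun ω => ‖w e ω - gradient f (θ e ω)‖ ^ 2|𝓕 e] ω ≤ σ ^ 2)
    (hgrad_int : ∀ e < n, Integrable (fun ω => ‖gradient f (θ e ω)‖ ^ 2) μ)
    (hfθ : Integrable (fun ω => f (θ n ω)) μ) :
    ∫ ω, f (θ n ω) ∂μ ≤ f x₀ + (K * η ^ 2 / 2 - η) *
      ∑ e ∈ Finset.range n, ∫ ω, ‖gradient f (θ e ω)‖ ^ 2 ∂μ + n * (K * η ^ 2 * σ ^ 2 / 2) := by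
  have hgrad_cont : Continuous (gradient f) :=
    (LipschitzWith.of_dist_le_mul (K := K.toNNReal) fun x y => by
      simpa [dist_eq_norm, Real.coe_toNNReal K hK] using hKf x y).continuous
  have hgrad𝓕 e (he : e < n) : StronglyMeasurable[𝓕 e] fun ω => gradient f (θ e ω) :=
    hgrad_cont.comp_stronglyMeasurable (hθ𝓕 e he)
  have hD_int e (he : e ∈ Finset.range n) :
      Integrable (fun ω => sgdDescentBound K η (gradient f (θ e ω)) (w e ω)) μ := by
    rw [Finset.mem_range] at he
    exact integrable_sgdDescentBound (h𝓕 e he) (hgrad𝓕 e he) (hw e he) (hgrad_int e he)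
      (hvar_int e he)
  have hpath ω : f (θ n ω) ≤ f x₀ + ∑ e ∈ Finset.range n,
      sgdDescentBound K η (gradient f (θ e ω)) (w e ω) := by
    simpa [hθ0] using le_add_sum_sgdDescentBound hf hKf (θ := fun e => θ e ω)
      (w := fun e => w e ω) fun e he => hθ e he ω
  calc ∫ ω, f (θ n ω) ∂μ
      ≤ ∫ ω, (f x₀ + ∑ e ∈ Finset.range n, sgdDescentBound K η (gradient f (θ e ω)) (w e ω)) ∂μ :=
        integral_mono hfθ ((integrable_const _).add (integrable_finsetSum _ hD_int)) hpath
    _ = f x₀ + ∑ e ∈ Finset.range n, ∫ ω, sgdDescentBound K η (gradient f (θ e ω)) (w e ω) ∂μ := by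
        rw [integral_add (integrable_const _) (integrable_finsetSum _ hD_int),
          integral_finsetSum _ hD_int, integral_const, probReal_univ, one_smul]
    _ ≤ f x₀ + ∑ e ∈ Finset.range n, ((K * η ^ 2 / 2 - η) *
          ∫ ω, ‖gradient f (θ e ω)‖ ^ 2 ∂μ + K * η ^ 2 * σ ^ 2 / 2) := by
        gcongr with e he
        rw [Finset.mem_range] at he
        exact integral_sgdDescentBound_le (h𝓕 e he) (hgrad𝓕 e he) (hw e he) (hgrad_int e he)
          (hvar_int e he) hK (hmean e he) (hvar e he)
    _ = _ := by
        rw [Finset.sum_add_distrib, ← Finset.mul_sum, Finset.sum_const, Finset.card_range,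
          nsmul_eq_mul, add_assoc]

end SGD

theorem integral_le_integral_add_mul_integral_dist {Ω E : Type*} [MeasurableSpace Ω]
    {μ : Measure Ω} [PseudoMetricSpace E] {φ : Ω → E → ℝ} {K : NNReal}
    (hφ : ∀ ω, LipschitzWith K (φ ω)) {X Y : Ω → E} (hX : Integrable (fun ω => φ ω (X ω)) μ)
    (hY : Integrable (fun ω => φ ω (Y ω)) μ) (hXY : Integrable (fun ω => dist (X ω) (Y ω)) μ) :
    ∫ ω, φ ω (X ω) ∂μ ≤ ∫ ω, φ ω (Y ω) ∂μ + K * ∫ ω, dist (X ω) (Y ω) ∂μ := by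
  rw [← integral_const_mul, ← integral_add hY (hXY.const_mul _)]
  exact integral_mono hX (hY.add (hXY.const_mul _)) fun ω => (hφ ω).le_add_mul _ _

theorem one_iteration_deviation_general
    (d M Esteps : ℕ)
    (L₁ ηc ηs R R' σ : ℝ) (hL₁ : 0 < L₁) (hηs : 0 < ηs)
    (L : EuclideanSpace ℝ (Fin d) → EuclideanSpace ℝ (Fin M) → ℝ)
    (G : EuclideanSpace ℝ (Fin M))
    -- (i) θ ↦ L(θ, G) is differentiable with L₁-Lipschitz gradient
    (hdiff : Differentiable ℝ (fun t => L t G))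
    (hlipgrad : ∀ x y : EuclideanSpace ℝ (Fin d),
      ‖gradient (fun t => L t G) x - gradient (fun t => L t G) y‖ ≤ L₁ * ‖x - y‖)
    -- (ii) G' ↦ L(θ, G') is 1-Lipschitz for every θ
    (hlipG : ∀ t : EuclideanSpace ℝ (Fin d), LipschitzWith 1 (L t))
    {Ω : Type*} [MeasurableSpace Ω] (μ : Measure Ω) [IsProbabilityMeasure μ]
    (θ0 : EuclideanSpace ℝ (Fin d))
    (θ w : ℕ → Ω → EuclideanSpace ℝ (Fin d))
    (hθ0 : θ 0 = fun _ => θ0)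
    (hθ : ∀ e < Esteps, ∀ x, θ (e + 1) x = θ e x - ηc • w e x)
    (hw_meas : ∀ e, Measurable (w e))
    (hw_int : ∀ e, Integrable (w e) μ)
    -- Assumption 1 (unbiased gradient)
    (hmean : ∀ e < Esteps,
      μ[w e | ⨆ j ∈ Finset.range (e + 1), MeasurableSpace.comap (θ j) inferInstance]
        =ᵐ[μ] fun x => gradient (fun t => L t G) (θ e x))
    (hvar_int : ∀ e < Esteps,
      Integrable (fun x => ‖w e x - gradient (fun t => L t G) (θ e x)‖ ^ 2) μ)
    -- Assumption 1 (bounded variance)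
    (hvar : ∀ e < Esteps, ∀ᵐ x ∂μ,
      (μ[(fun y => ‖w e y - gradient (fun t => L t G) (θ e y)‖ ^ 2) |
        ⨆ j ∈ Finset.range (e + 1), MeasurableSpace.comap (θ j) inferInstance]) x ≤ σ ^ 2)
    (hgrad_int : ∀ e < Esteps,
      Integrable (fun x => ‖gradient (fun t => L t G) (θ e x)‖ ^ 2) μ)
    -- Assumption 2: the aggregated guiding-vector gradient is bounded in expectation
    (π : Ω → EuclideanSpace ℝ (Fin M))
    (hπ_int : Integrable (fun x => ‖π x‖) μ)
    (hπ : ∫ x, ‖π x‖ ∂μ ≤ 2 * ηc ^ 2 * R' * Esteps * R)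
    (hL_int : Integrable (fun x => L (θ Esteps x) (G - ηs • π x)) μ)
    (hL_int' : Integrable (fun x => L (θ Esteps x) G) μ) :
    ∫ x, L (θ Esteps x) (G - ηs • π x) ∂μ ≤
      L θ0 G + (L₁ * ηc ^ 2 / 2 - ηc) *
        ∑ e ∈ Finset.range Esteps, ∫ x, ‖gradient (fun t => L t G) (θ e x)‖ ^ 2 ∂μ
      + L₁ * Esteps * ηc ^ 2 * σ ^ 2 / 2 + 2 * ηc ^ 2 * ηs * R' * Esteps * R := by
  have hθ_meas := measurable_of_succ_eq_sub_smul (hθ0 ▸ measurable_const)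
    (fun e _ => hw_meas e) hθ
  have hclient := integral_sgd_le
    (𝓕 := fun e => ⨆ j ∈ Finset.range (e + 1), MeasurableSpace.comap (θ j) inferInstance)
    hdiff hL₁.le hlipgrad (fun ω => congrFun hθ0 ω) hθ
    (fun e he => iSup₂_le fun j hj => (hθ_meas j (by simp at hj; omega)).comap_le)
    (fun e _ => (Measurable.of_comap_le (le_iSup₂ (f := fun j _ => MeasurableSpace.comap (θ j)
      inferInstance) e (Finset.self_mem_range_succ e))).stronglyMeasurable)
    (fun e _ => hw_int e) hmean hvar_int hvar hgrad_int hL_int'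
  have hdist : (fun x => dist (G - ηs • π x) G) = fun x => ηs * ‖π x‖ := by
    ext x
    simp [norm_smul, abs_of_pos hηs]
  have hserver := integral_le_integral_add_mul_integral_dist (fun x => hlipG (θ Esteps x))
    hL_int hL_int' (hdist ▸ hπ_int.const_mul ηs)
  rw [hdist, integral_const_mul, NNReal.coe_one, one_mul] at hserver
  calc _ ≤ _ := hserver
    _ ≤ _ := add_le_add hclient (mul_le_mul_of_nonneg_left hπ hηs.le)
    _ = _ := by ring

/-- Theorem 1 (one-iteration deviation): for an arbitrary client of FedL2G,
after `E` local SGD steps on the total loss `θ ↦ L(θ, G)` (which is `L₁`-smooth,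
with conditionally unbiased stochastic gradients of conditional variance at most
`σ²`) followed by the server update `G ↦ G − η_s π` (with `E[‖π‖] ≤ 2η_c²R'ER`,
and `G' ↦ L(θ, G')` 1-Lipschitz), one has
`E[L(θ^E, G − η_sπ)] ≤ L(θ⁰, G) + (L₁η_c²/2 − η_c)·Σ_{e<E} E[‖∇_θL(θ^e, G)‖²]
  + L₁Eη_c²σ²/2 + 2η_c²η_sR'ER`. -/
theorem one_iteration_deviation
    (d M Esteps : ℕ) (hd : 0 < d) (hM : 0 < M) (hE : 0 < Esteps)
    (L₁ ηc ηs R R' σ : ℝ) (hL₁ : 0 < L₁) (hηc : 0 < ηc) (hηs : 0 < ηs)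
    (hR : 0 < R) (hR' : 0 < R') (hσ : 0 ≤ σ)
    (L : EuclideanSpace ℝ (Fin d) → EuclideanSpace ℝ (Fin M) → ℝ)
    (G : EuclideanSpace ℝ (Fin M))
    -- (i) θ ↦ L(θ, G) is differentiable with L₁-Lipschitz gradient
    (hdiff : Differentiable ℝ (fun t => L t G))
    (hlipgrad : ∀ x y : EuclideanSpace ℝ (Fin d),
      ‖gradient (fun t => L t G) x - gradient (fun t => L t G) y‖ ≤ L₁ * ‖x - y‖)
    -- (ii) G' ↦ L(θ, G') is 1-Lipschitz for every θ
    (hlipG : ∀ t : EuclideanSpace ℝ (Fin d), LipschitzWith 1 (L t))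
    {Ω : Type*} [MeasurableSpace Ω] (μ : Measure Ω) [IsProbabilityMeasure μ]
    (θ0 : EuclideanSpace ℝ (Fin d))
    (θ w : ℕ → Ω → EuclideanSpace ℝ (Fin d))
    (hθ0 : θ 0 = fun _ => θ0)
    (hθ : ∀ e < Esteps, ∀ x, θ (e + 1) x = θ e x - ηc • w e x)
    (hw_meas : ∀ e, Measurable (w e))
    (hw_int : ∀ e, Integrable (w e) μ)
    -- Assumption 1 (unbiased gradient)
    (hmean : ∀ e < Esteps,
      μ[w e | ⨆ j ∈ Finset.range (e + 1), MeasurableSpace.comap (θ j) inferInstance]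
        =ᵐ[μ] fun x => gradient (fun t => L t G) (θ e x))
    (hvar_int : ∀ e < Esteps,
      Integrable (fun x => ‖w e x - gradient (fun t => L t G) (θ e x)‖ ^ 2) μ)
    -- Assumption 1 (bounded variance)
    (hvar : ∀ e < Esteps, ∀ᵐ x ∂μ,
      (μ[(fun y => ‖w e y - gradient (fun t => L t G) (θ e y)‖ ^ 2) |
        ⨆ j ∈ Finset.range (e + 1), MeasurableSpace.comap (θ j) inferInstance]) x ≤ σ ^ 2)
    (hgrad_int : ∀ e < Esteps,
      Integrable (fun x => ‖gradient (fun t => L t G) (θ e x)‖ ^ 2) μ)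
    -- Assumption 2: the aggregated guiding-vector gradient is bounded in expectation
    (π : Ω → EuclideanSpace ℝ (Fin M))
    (hπ_int : Integrable (fun x => ‖π x‖) μ)
    (hπ : ∫ x, ‖π x‖ ∂μ ≤ 2 * ηc ^ 2 * R' * Esteps * R)
    (hL_int : Integrable (fun x => L (θ Esteps x) (G - ηs • π x)) μ)
    (hL_int' : Integrable (fun x => L (θ Esteps x) G) μ) :
    ∫ x, L (θ Esteps x) (G - ηs • π x) ∂μ ≤
      L θ0 G + (L₁ * ηc ^ 2 / 2 - ηc) *
        ∑ e ∈ Finset.range Esteps, ∫ x, ‖gradient (fun t => L t G) (θ e x)‖ ^ 2 ∂μ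
      + L₁ * Esteps * ηc ^ 2 * σ ^ 2 / 2 + 2 * ηc ^ 2 * ηs * R' * Esteps * R :=
  one_iteration_deviation_general d M Esteps L₁ ηc ηs R R' σ hL₁ hηs L G hdiff hlipgrad hlipG μ θ0 θ
    w hθ0 hθ hw_meas hw_int hmean hvar_int hvar hgrad_int π hπ_int hπ hL_int hL_int'
end

section
/- Let T, E be positive integers, L₁ > 0, σ ≥ 0, η_s, R, R' ≥ 0, ε > 0, and suppose 0 < η_c < 2ε / (L₁(Eσ² + ε) + 4η_s R' E R). Let L* ∈ ℝ, let (a_t)_{t=0}^{T} be real numbers with a_t ≥ L* for all t, and let g_{t,e} ≥ 0 for 0 ≤ t ≤ T−1 and 0 ≤ e ≤ E−1 satisfy, for every t, a_{t+1} ≤ a_t + (L₁η_c²/2 − η_c) · Σ_{e=0}^{E−1} g_{t,e} + L₁ E η_c² σ² / 2 + 2 η_c² η_s R' E R. If moreover T > 2Δ / (ε η_c (2 − L₁η_c) − η_c² (L₁ E σ² + 4 η_s R' E R)) where Δ = a_0 − L*, then (1/T) · Σ_{t=0}^{T−1} Σ_{e=0}^{E−1} g_{t,e} < ε. -/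
/-!
With `c = ηc - L₁ ηc² / 2` and the noise term `K = L₁ E ηc² σ² / 2 + 2 ηc² ηs R' E R`, each
iteration decreases `a` by at least `c · ∑ₑ g t e - K`. Telescoping and `a T ≥ L*` give
`c · ∑ₜ ∑ₑ g t e ≤ Δ + T K`. The denominator in the bound on `T` equals `2 (c ε - K)`, so that bound
reads `T (c ε - K) > Δ`, whence `c · ∑ₜ ∑ₑ g t e < T c ε`. The step-size condition on `ηc` makes
both `c` and `c ε - K` positive.
-/

open Finset

theorem mul_sum_range_le_of_descent {a G : ℕ → ℝ} {c K : ℝ} {T : ℕ}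
    (h : ∀ t < T, a (t + 1) ≤ a t - c * G t + K) :
    c * ∑ t ∈ range T, G t ≤ a 0 - a T + T * K := by
  induction T with
  | zero => simp
  | succ n ih =>
    have hn := h n n.lt_succ_self
    have ih := ih fun t ht => h t (ht.trans n.lt_succ_self)
    rw [sum_range_succ, mul_add]
    push_cast
    linarith

theorem average_lt_of_descent {a G : ℕ → ℝ} {c K ε Lstar : ℝ} {T : ℕ} (hT : 0 < T) (hc : 0 < c)
    (hlow : Lstar ≤ a T) (h : ∀ t < T, a (t + 1) ≤ a t - c * G t + K)
    (hlarge : a 0 - Lstar < T * (c * ε - K)) :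
    1 / (T : ℝ) * ∑ t ∈ range T, G t < ε := by
  have hsum := mul_sum_range_le_of_descent h
  have hS : ∑ t ∈ range T, G t < T * ε :=
    lt_of_mul_lt_mul_left (by linarith) hc.le
  rwa [one_div, inv_mul_lt_iff₀ (by exact_mod_cast hT)]

theorem descent_coeff_pos_and_gap_pos {L₁ ε ηc V B : ℝ} (hL₁ : 0 ≤ L₁) (hV : 0 ≤ V) (hB : 0 ≤ B)
    (hε : 0 < ε) (hηc0 : 0 < ηc) (hηc : ηc * (L₁ * (V + ε) + B) < 2 * ε) :
    0 < ηc - L₁ * ηc ^ 2 / 2 ∧ 0 < ε * ηc * (2 - L₁ * ηc) - ηc ^ 2 * (L₁ * V + B) := by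
  constructor
  · have hLηc : L₁ * ηc < 2 := by
      have : ηc * (L₁ * ε) ≤ ηc * (L₁ * (V + ε) + B) := by
        gcongr; nlinarith
      nlinarith
    nlinarith
  · have : ε * ηc * (2 - L₁ * ηc) - ηc ^ 2 * (L₁ * V + B)
        = ηc * (2 * ε - ηc * (L₁ * (V + ε) + B)) := by ring
    rw [this]
    exact mul_pos hηc0 (by linarith)

theorem fedl2g_epsilon_accuracy_general
    (T Esteps : ℕ) (hT : 0 < T)
    (L₁ σ ηs R R' ε ηc : ℝ) (hL₁ : 0 < L₁)
    (hηs : 0 ≤ ηs) (hR : 0 ≤ R) (hR' : 0 ≤ R') (hε : 0 < ε)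
    (hηc0 : 0 < ηc)
    (hηc : ηc < 2 * ε / (L₁ * (Esteps * σ ^ 2 + ε) + 4 * ηs * R' * Esteps * R))
    (Lstar : ℝ) (a : ℕ → ℝ) (g : ℕ → ℕ → ℝ)
    (ha : ∀ t ≤ T, Lstar ≤ a t)
    (hrec : ∀ t < T, a (t + 1) ≤ a t
      + (L₁ * ηc ^ 2 / 2 - ηc) * ∑ e ∈ Finset.range Esteps, g t e
      + L₁ * Esteps * ηc ^ 2 * σ ^ 2 / 2 + 2 * ηc ^ 2 * ηs * R' * Esteps * R)
    (hT' : (T : ℝ) > 2 * (a 0 - Lstar) /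
      (ε * ηc * (2 - L₁ * ηc) - ηc ^ 2 * (L₁ * Esteps * σ ^ 2 + 4 * ηs * R' * Esteps * R))) :
    (1 / (T : ℝ)) * ∑ t ∈ Finset.range T, ∑ e ∈ Finset.range Esteps, g t e < ε := by
  have hstep : ηc * (L₁ * (Esteps * σ ^ 2 + ε) + 4 * ηs * R' * Esteps * R) < 2 * ε :=
    (lt_div_iff₀ (by positivity)).1 hηc
  obtain ⟨hc, hgap⟩ := descent_coeff_pos_and_gap_pos hL₁.le (by positivity) (by positivity) hε
    hηc0 hstep
  rw [← mul_assoc L₁] at hgap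
  have hlarge := (div_lt_iff₀ hgap).1 hT'
  refine average_lt_of_descent (c := ηc - L₁ * ηc ^ 2 / 2)
    (K := L₁ * Esteps * ηc ^ 2 * σ ^ 2 / 2 + 2 * ηc ^ 2 * ηs * R' * Esteps * R)
    hT hc (ha T le_rfl) (fun t ht => by linarith [hrec t ht]) (by linarith)

/-- Theorem 2, ε-accuracy statement: under the per-iteration deviation
inequality of Theorem 1, if the client learning rate satisfies
`0 < η_c < 2ε/(L₁(Eσ² + ε) + 4η_sR'ER)` and the number of communication
iterations satisfies `T > 2Δ/(εη_c(2 − L₁η_c) − η_c²(L₁Eσ² + 4η_sR'ER))` with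
`Δ = a 0 − L*`, then the time average of the expected squared gradient norms
`g t e` is strictly below `ε`. -/
theorem fedl2g_epsilon_accuracy
    (T Esteps : ℕ) (hT : 0 < T) (hE : 0 < Esteps)
    (L₁ σ ηs R R' ε ηc : ℝ) (hL₁ : 0 < L₁) (hσ : 0 ≤ σ)
    (hηs : 0 ≤ ηs) (hR : 0 ≤ R) (hR' : 0 ≤ R') (hε : 0 < ε)
    (hηc0 : 0 < ηc)
    (hηc : ηc < 2 * ε / (L₁ * (Esteps * σ ^ 2 + ε) + 4 * ηs * R' * Esteps * R))
    (Lstar : ℝ) (a : ℕ → ℝ) (g : ℕ → ℕ → ℝ)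
    (ha : ∀ t ≤ T, Lstar ≤ a t)
    (hg : ∀ t < T, ∀ e < Esteps, 0 ≤ g t e)
    (hrec : ∀ t < T, a (t + 1) ≤ a t
      + (L₁ * ηc ^ 2 / 2 - ηc) * ∑ e ∈ Finset.range Esteps, g t e
      + L₁ * Esteps * ηc ^ 2 * σ ^ 2 / 2 + 2 * ηc ^ 2 * ηs * R' * Esteps * R)
    (hT' : (T : ℝ) > 2 * (a 0 - Lstar) /
      (ε * ηc * (2 - L₁ * ηc) - ηc ^ 2 * (L₁ * Esteps * σ ^ 2 + 4 * ηs * R' * Esteps * R))) :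
    (1 / (T : ℝ)) * ∑ t ∈ Finset.range T, ∑ e ∈ Finset.range Esteps, g t e < ε :=
  fedl2g_epsilon_accuracy_general T Esteps hT L₁ σ ηs R R' ε ηc hL₁ hηs hR hR' hε hηc0 hηc Lstar a g
    ha hrec hT'
end

section
/- Let d, M be positive integers, η > 0, and θ ∈ ℝ^d. Let f : ℝ^d → ℝ^M be differentiable at θ, A : ℝ^d → ℝ differentiable at θ, and for v ∈ ℝ^M define the pseudo-trained parameters T(v) = θ − η∇A(θ) − (2η/M) · (Df(θ))*(f(θ) − v) ∈ ℝ^d, where Df(θ) : ℝ^d → ℝ^M is the derivative (Jacobian) of f at θ and (Df(θ))* its adjoint (transpose); equivalently, T(v) = θ − η∇_θ[A(θ) + (1/M)‖f(θ) − v‖₂²]. Let c : ℝ^M → ℝ and fix v ∈ ℝ^M such that f is differentiable at T(v) and c is differentiable at f(T(v)), and define φ(v) = c(f(T(v))). Then φ is differentiable at v with gradient ∇φ(v) = (2η/M) · Df(θ)[∇(c∘f)(T(v))]. In particular, computing ∇φ(v) requires only first-order derivatives of f (no Hessian of f appears). -/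
/-!
The pseudo-trained parameters `T` are an affine function of the guiding vector `v`, with linear
part `(2η/M) • (Df θ)†`. By the chain rule, the gradient of `c ∘ f ∘ T` at `v` is the adjoint of
that linear part applied to `∇(c ∘ f)(T v)`, and `(Df θ)†† = Df θ`: the Hessian of `f`, which
would appear if `T` were differentiated through `θ`, never enters.
-/

open ContinuousLinearMap

theorem HasGradientAt.comp_hasFDerivAt {𝕜 E F : Type*} [RCLike 𝕜]
    [NormedAddCommGroup E] [InnerProductSpace 𝕜 E] [CompleteSpace E]
    [NormedAddCommGroup F] [InnerProductSpace 𝕜 F] [CompleteSpace F]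
    {g : F → 𝕜} {g' : F} {T : E → F} {K : E →L[𝕜] F} {v : E}
    (hg : HasGradientAt g g' (T v)) (hT : HasFDerivAt T K v) :
    HasGradientAt (g ∘ T) (adjoint K g') v := by
  rw [hasGradientAt_iff_hasFDerivAt] at hg ⊢
  refine (hg.comp v hT).congr_fderiv (ext fun u => ?_)
  simp only [InnerProductSpace.toDual_apply_apply, comp_apply, adjoint_inner_left]

theorem hasFDerivAt_sub_smul_apply_sub {E F : Type*}
    [NormedAddCommGroup E] [NormedSpace ℝ E] [NormedAddCommGroup F] [NormedSpace ℝ F]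
    (p : F) (s : ℝ) (K : E →L[ℝ] F) (q v : E) :
    HasFDerivAt (fun u => p - s • K (q - u)) (s • K) v := by
  have h_affine : (fun u => p - s • K (q - u)) = fun u => (p - s • K q) + (s • K) u := by
    funext u
    simp only [map_sub, smul_sub, smul_apply]
    abel
  rw [h_affine]
  exact (s • K).hasFDerivAt.const_add _

theorem guiding_vector_gradient_first_order_general
    (d M : ℕ) (η : ℝ)
    (θ : EuclideanSpace ℝ (Fin d))
    (f : EuclideanSpace ℝ (Fin d) → EuclideanSpace ℝ (Fin M))
    (A : EuclideanSpace ℝ (Fin d) → ℝ)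
    (c : EuclideanSpace ℝ (Fin M) → ℝ)
    (T : EuclideanSpace ℝ (Fin M) → EuclideanSpace ℝ (Fin d))
    (hT : ∀ v, T v = θ - η • gradient A θ -
      (2 * η / (M : ℝ)) • (ContinuousLinearMap.adjoint (fderiv ℝ f θ)) (f θ - v))
    (v : EuclideanSpace ℝ (Fin M))
    (hfv : DifferentiableAt ℝ f (T v))
    (hcv : DifferentiableAt ℝ c (f (T v))) :
    HasGradientAt (fun u => c (f (T u)))
      ((2 * η / (M : ℝ)) • (fderiv ℝ f θ) (gradient (c ∘ f) (T v))) v := by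
  have hT_deriv : HasFDerivAt T ((2 * η / (M : ℝ)) • adjoint (fderiv ℝ f θ)) v := by
    rw [funext hT]
    exact hasFDerivAt_sub_smul_apply_sub _ _ _ _ _
  have h_chain := (hcv.comp _ hfv).hasGradientAt.comp_hasFDerivAt hT_deriv
  rwa [map_smulₛₗ, adjoint_adjoint, RCLike.conj_to_real, smul_apply] at h_chain

/-- Efficiency analysis (Section 3.3, Equation (4)): with the pseudo-trained
parameters `T(v) = θ − η∇A(θ) − (2η/M)·(Df(θ))*(f(θ) − v)`, the quiz-set loss
`φ(v) = c(f(T(v)))` is differentiable at `v` with gradient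
`∇φ(v) = (2η/M)·Df(θ)[∇(c∘f)(T(v))]`, which involves only first-order
derivatives of `f`. -/
theorem guiding_vector_gradient_first_order
    (d M : ℕ) (hd : 0 < d) (hM : 0 < M) (η : ℝ) (hη : 0 < η)
    (θ : EuclideanSpace ℝ (Fin d))
    (f : EuclideanSpace ℝ (Fin d) → EuclideanSpace ℝ (Fin M))
    (A : EuclideanSpace ℝ (Fin d) → ℝ)
    (hf : DifferentiableAt ℝ f θ) (hA : DifferentiableAt ℝ A θ)
    (c : EuclideanSpace ℝ (Fin M) → ℝ)
    (T : EuclideanSpace ℝ (Fin M) → EuclideanSpace ℝ (Fin d))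
    (hT : ∀ v, T v = θ - η • gradient A θ -
      (2 * η / (M : ℝ)) • (ContinuousLinearMap.adjoint (fderiv ℝ f θ)) (f θ - v))
    (v : EuclideanSpace ℝ (Fin M))
    (hfv : DifferentiableAt ℝ f (T v))
    (hcv : DifferentiableAt ℝ c (f (T v))) :
    HasGradientAt (fun u => c (f (T u)))
      ((2 * η / (M : ℝ)) • (fderiv ℝ f θ) (gradient (c ∘ f) (T v))) v :=
  guiding_vector_gradient_first_order_general d M η θ f A c T hT v hfv hcv
end
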